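/- The vector fields on $\mathbb{R}^4$ (coordinates $x^1,x^2,x^3,x^4$) given by $X_1 = \partial_{x^1}$, $X_2 = \partial_{x^2}$, $X_3 = x^2\partial_{x^1} + \partial_{x^3}$, $X_4 = -x^1\partial_{x^1} + x^2\partial_{x^2} - 2x^3\partial_{x^3} + \partial_{x^4}$, $X_5 = x^1\partial_{x^2} - (x^3)^2\partial_{x^3} + x^3\partial_{x^4}$ satisfy, as first-order differential operators on smooth functions, the commutation relations $[X_1,X_4]=-X_1$, $[X_1,X_5]=X_2$, $[X_2,X_3]=X_1$, $[X_2,X_4]=X_2$, $[X_3,X_4]=-2X_3$, $[X_3,X_5]=X_4$, $[X_4,X_5]=-2X_5$, with all other commutators among $X_1,\dots,X_5$ vanishing. -/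

import Mathlib

/-- Partial derivative `∂/∂xⁱ` of a smooth function on `ℝ⁴`. -/
noncomputable def pd4 (i : Fin 4) (φ : (Fin 4 → ℝ) → ℝ) (x : Fin 4 → ℝ) : ℝ :=
  fderiv ℝ φ x (Pi.single i 1)

/-- The vector fields `X₁,…,X₅` on `ℝ⁴` (indices shifted to `0,…,4`):
`X₁ = ∂₁`, `X₂ = ∂₂`, `X₃ = x²∂₁ + ∂₃`,
`X₄ = -x¹∂₁ + x²∂₂ - 2x³∂₃ + ∂₄`, `X₅ = x¹∂₂ - (x³)²∂₃ + x³∂₄`. -/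
noncomputable def Xop : Fin 5 → ((Fin 4 → ℝ) → ℝ) → (Fin 4 → ℝ) → ℝ
  | 0 => fun φ x => pd4 0 φ x
  | 1 => fun φ x => pd4 1 φ x
  | 2 => fun φ x => x 1 * pd4 0 φ x + pd4 2 φ x
  | 3 => fun φ x => -(x 0) * pd4 0 φ x + x 1 * pd4 1 φ x - 2 * x 2 * pd4 2 φ x + pd4 3 φ x
  | 4 => fun φ x => x 0 * pd4 1 φ x - (x 2)^2 * pd4 2 φ x + x 2 * pd4 3 φ x

lemma contDiff_pd4 {φ : (Fin 4 → ℝ) → ℝ} (hφ : ContDiff ℝ (⊤ : ℕ∞) φ) (i : Fin 4) :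
    ContDiff ℝ (⊤ : ℕ∞) (pd4 i φ) := by
  unfold pd4
  exact (hφ.fderiv_right le_rfl).clm_apply contDiff_const

lemma pd4_coord (i j : Fin 4) (x : Fin 4 → ℝ) :
    pd4 i (fun y => y j) x = if j = i then 1 else 0 := by
  unfold pd4
  rw [show (fun y : Fin 4 → ℝ => y j)
      = fun y => (ContinuousLinearMap.proj j : (Fin 4 → ℝ) →L[ℝ] ℝ) y from rfl,
    ContinuousLinearMap.fderiv]
  simp [Pi.single_apply]

lemma pd4_comm {φ : (Fin 4 → ℝ) → ℝ} (hφ : ContDiff ℝ (⊤ : ℕ∞) φ) (i j : Fin 4) (x : Fin 4 → ℝ) :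
    pd4 i (pd4 j φ) x = pd4 j (pd4 i φ) x := by
  have hd : Differentiable ℝ (fderiv ℝ φ) :=
    (hφ.fderiv_right (m := 1) (WithTop.coe_le_coe.mpr le_top)).differentiable (by simp)
  have h : ∀ k l : Fin 4, pd4 k (pd4 l φ) x
      = fderiv ℝ (fderiv ℝ φ) x (Pi.single k 1) (Pi.single l 1) := by
    intro k l
    unfold pd4
    rw [fderiv_clm_apply (hd x) (differentiableAt_const _)]
    try simp
  rw [h, h]
  exact (hφ.contDiffAt.isSymmSndFDerivAt (by
    rw [minSmoothness_of_isRCLikeNormedField]; exact WithTop.coe_le_coe.mpr le_top)) _ _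

section rules
variable {f g : (Fin 4 → ℝ) → ℝ} {x : Fin 4 → ℝ} {i : Fin 4}

lemma pd4_add (hf : DifferentiableAt ℝ f x) (hg : DifferentiableAt ℝ g x) :
    pd4 i (fun y => f y + g y) x = pd4 i f x + pd4 i g x := by
  unfold pd4; rw [fderiv_fun_add hf hg]; rfl

lemma pd4_sub (hf : DifferentiableAt ℝ f x) (hg : DifferentiableAt ℝ g x) :
    pd4 i (fun y => f y - g y) x = pd4 i f x - pd4 i g x := by
  unfold pd4; rw [fderiv_fun_sub hf hg]; rfl

lemma pd4_mul (hf : DifferentiableAt ℝ f x) (hg : DifferentiableAt ℝ g x) :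
    pd4 i (fun y => f y * g y) x = pd4 i f x * g x + f x * pd4 i g x := by
  unfold pd4; rw [fderiv_fun_mul hf hg]; simp; ring

lemma pd4_neg (hf : DifferentiableAt ℝ f x) :
    pd4 i (fun y => -(f y)) x = -(pd4 i f x) := by
  unfold pd4; rw [fderiv_fun_neg]; rfl

lemma pd4_const (c : ℝ) : pd4 i (fun _ => c) x = 0 := by
  unfold pd4; simp

end rules

/-- the vector fields `X₁,…,X₅` on `ℝ⁴`, acting as first-order
differential operators on smooth functions, satisfy the commutation relations
`[X₁,X₄]=-X₁`, `[X₁,X₅]=X₂`, `[X₂,X₃]=X₁`, `[X₂,X₄]=X₂`, `[X₃,X₄]=-2X₃`,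
`[X₃,X₅]=X₄`, `[X₄,X₅]=-2X₅`, all other commutators vanishing. -/
theorem vector_fields_commutators (φ : (Fin 4 → ℝ) → ℝ) (hφ : ContDiff ℝ (⊤ : ℕ∞) φ) :
    ∀ x : Fin 4 → ℝ,
      (Xop 0 (Xop 3 φ) x - Xop 3 (Xop 0 φ) x = -(Xop 0 φ x)) ∧
      (Xop 0 (Xop 4 φ) x - Xop 4 (Xop 0 φ) x = Xop 1 φ x) ∧
      (Xop 1 (Xop 2 φ) x - Xop 2 (Xop 1 φ) x = Xop 0 φ x) ∧
      (Xop 1 (Xop 3 φ) x - Xop 3 (Xop 1 φ) x = Xop 1 φ x) ∧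
      (Xop 2 (Xop 3 φ) x - Xop 3 (Xop 2 φ) x = -2 * Xop 2 φ x) ∧
      (Xop 2 (Xop 4 φ) x - Xop 4 (Xop 2 φ) x = Xop 3 φ x) ∧
      (Xop 3 (Xop 4 φ) x - Xop 4 (Xop 3 φ) x = -2 * Xop 4 φ x) ∧
      (Xop 0 (Xop 1 φ) x - Xop 1 (Xop 0 φ) x = 0) ∧
      (Xop 0 (Xop 2 φ) x - Xop 2 (Xop 0 φ) x = 0) ∧
      (Xop 1 (Xop 4 φ) x - Xop 4 (Xop 1 φ) x = 0) := by
  intro x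
  have hd0 := (contDiff_pd4 hφ 0).differentiable (by simp)
  have hd1 := (contDiff_pd4 hφ 1).differentiable (by simp)
  have hd2 := (contDiff_pd4 hφ 2).differentiable (by simp)
  have hd3 := (contDiff_pd4 hφ 3).differentiable (by simp)
  have c01 := pd4_comm hφ 0 1
  have c02 := pd4_comm hφ 0 2
  have c03 := pd4_comm hφ 0 3
  have c12 := pd4_comm hφ 1 2
  have c13 := pd4_comm hφ 1 3
  have c23 := pd4_comm hφ 2 3
  refine ⟨?_, ?_, ?_, ?_, ?_, ?_, ?_, ?_, ?_, ?_⟩ <;>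
  · simp only [Xop]
    try simp (disch := fun_prop) only [pow_two, pd4_add, pd4_sub, pd4_mul, pd4_neg, pd4_const,
      pd4_coord]
    try simp only [c01, c02, c03, c12, c13, c23]
    try simp
    try ring
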